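/- Let p = p(n) satisfy n^{-1/2}(ln n)^{10/9} < p < 1/ln n, set c = np, h = 3·ln ln c/ln c, and b = ⌊(2−h)·(n·ln c)/c⌋. Then for all sufficiently large n and every integer ℓ with 1 ≤ ℓ ≤ b: ((n−b)_{b−ℓ}/(n)_{b}) · p^{−ℓ} · (1−p)^{ℓ − binom(ℓ,2)} < 6^{ℓ} · c^{−hℓ/2 + ℓ/ln n}. In particular this upper bound is of the form 6^{ℓ} · c^{−(1−o(1))·hℓ/2} uniformly in ℓ ≤ b. -/

import Mathlib

/-! Since `(n)_b ≥ (n-b)_{b-ℓ} (n-b)^ℓ`, the left-hand side is at most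
`q^{-ℓ} (1-p)^{-binom(ℓ,2)}` with `q = (n-b)p`. As `b p ≤ (2-h) ln c ≤ c/2`, we have `q ≥ c/2`,
and `binom(ℓ,2) (-ln(1-p)) ≤ (ℓ b / 2)(p + 2p²) ≤ (2-h) ℓ ln c / 2 + 2ℓ ln c / ln n`.
Hence the logarithm of the left-hand side is at most `ℓ ln 2 - (hℓ/2) ln c + 2ℓ ln c / ln n`,
which is below `ℓ ln 6 - (hℓ/2) ln c + ℓ ln c / ln n` because `ln c ≤ ln n` and `ln 3 > 1`.
The lower bound on `p` gives `c > √n`, so `c` is large. -/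

open Filter Real

theorem Nat.descFactorial_sub_mul_pow_le (n : ℕ) {b ℓ : ℕ} (hℓb : ℓ ≤ b) :
    (n - b).descFactorial (b - ℓ) * (n - b) ^ ℓ ≤ n.descFactorial b :=
  calc (n - b).descFactorial (b - ℓ) * (n - b) ^ ℓ
      ≤ (n - ℓ).descFactorial (b - ℓ) * n.descFactorial ℓ :=
        Nat.mul_le_mul (Nat.descFactorial_le _ (by omega))
          ((Nat.pow_le_pow_left (by omega) ℓ).trans (Nat.pow_sub_le_descFactorial n ℓ))
    _ = n.descFactorial b := Nat.descFactorial_mul_descFactorial hℓb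

theorem descFactorial_div_mul_zpow_le {n b ℓ : ℕ} (hbn : b < n) (hℓb : ℓ ≤ b) {p : ℝ}
    (hp0 : 0 < p) (hp1 : p < 1) :
    ((n - b).descFactorial (b - ℓ) : ℝ) / n.descFactorial b * p ^ (-(ℓ : ℤ)) *
        (1 - p) ^ ((ℓ : ℤ) - (ℓ.choose 2 : ℤ))
      ≤ (((n - b : ℕ) : ℝ) * p)⁻¹ ^ ℓ * (1 - p)⁻¹ ^ ℓ.choose 2 := by
  have hnb : (0 : ℝ) < (n - b : ℕ) := by exact_mod_cast Nat.sub_pos_of_lt hbn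
  have hdesc : (0 : ℝ) < n.descFactorial b := by
    exact_mod_cast Nat.descFactorial_pos.mpr hbn.le
  have hratio : ((n - b).descFactorial (b - ℓ) : ℝ) / n.descFactorial b
      ≤ (((n - b : ℕ) : ℝ) ^ ℓ)⁻¹ := by
    rw [div_le_iff₀ hdesc, inv_mul_eq_div, le_div_iff₀ (by positivity)]
    exact_mod_cast Nat.descFactorial_sub_mul_pow_le n hℓb
  have hchoose : (1 - p) ^ ((ℓ : ℤ) - (ℓ.choose 2 : ℤ)) ≤ (1 - p)⁻¹ ^ ℓ.choose 2 := by
    rw [zpow_sub₀ (by linarith), zpow_natCast, zpow_natCast, div_eq_mul_inv, inv_pow]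
    exact mul_le_of_le_one_left (by positivity) (pow_le_one₀ (by linarith) (by linarith))
  calc ((n - b).descFactorial (b - ℓ) : ℝ) / n.descFactorial b * p ^ (-(ℓ : ℤ)) *
        (1 - p) ^ ((ℓ : ℤ) - (ℓ.choose 2 : ℤ))
      ≤ (((n - b : ℕ) : ℝ) ^ ℓ)⁻¹ * (p ^ ℓ)⁻¹ * (1 - p)⁻¹ ^ ℓ.choose 2 := by
        rw [zpow_neg, zpow_natCast]
        gcongr
    _ = (((n - b : ℕ) : ℝ) * p)⁻¹ ^ ℓ * (1 - p)⁻¹ ^ ℓ.choose 2 := by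
        simp only [mul_inv, mul_pow, inv_pow]

theorem Real.neg_log_one_sub_le {p : ℝ} (hp : p ≤ 1 / 2) :
    -log (1 - p) ≤ p + 2 * p ^ 2 := by
  have h1p : 0 < 1 - p := by linarith
  have hlog := one_sub_inv_le_log_of_pos h1p
  have hfrac : (1 - p)⁻¹ - 1 ≤ p + 2 * p ^ 2 := by
    rw [inv_eq_one_div, div_sub_one h1p.ne', div_le_iff₀ h1p]
    nlinarith [mul_nonneg (sq_nonneg p) (by linarith : (0 : ℝ) ≤ 1 - 2 * p)]
  linarith

theorem Real.mul_log_le_self {k x : ℝ} (hk : 0 ≤ k) (hx : (2 * k) ^ 2 ≤ x) :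
    k * log x ≤ x := by
  have hx0 : 0 ≤ x := (sq_nonneg _).trans hx
  have hsqrt : 2 * k ≤ √x := Real.le_sqrt_of_sq_le hx
  calc k * log x ≤ k * (2 * √x) := by
        gcongr
        have := log_le_rpow_div hx0 one_half_pos
        rwa [← sqrt_eq_rpow, div_div_eq_mul_div, div_one, mul_comm] at this
    _ = (2 * k) * √x := by ring
    _ ≤ √x * √x := by gcongr
    _ = x := Real.mul_self_sqrt hx0

theorem Real.log_two_add_one_lt_log_six : log 2 + 1 < log 6 := by
  have h3 : 1 < log 3 := by
    rw [lt_log_iff_exp_lt (by norm_num)]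
    linarith [exp_one_lt_d9]
  have h6 : log 6 = log 2 + log 3 := by
    rw [← log_mul (by norm_num) (by norm_num)]; norm_num
  linarith

theorem Real.sqrt_lt_mul_of_rpow_neg_half_lt {x p : ℝ} (hx : 0 < x)
    (h : x ^ (-(1 : ℝ) / 2) < p) : √x < x * p := by
  have hsqrt : x * x ^ (-(1 : ℝ) / 2) = √x := by
    rw [sqrt_eq_rpow, ← rpow_one_add' hx.le (by norm_num)]
    norm_num
  rw [← hsqrt]
  gcongr

theorem descFactorial_div_mul_zpow_lt {n b ℓ : ℕ} {p H : ℝ} (hp0 : 0 < p)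
    (hpn : p < 1 / log n) (hlogn : 2 ≤ log n) (hC : 64 ≤ n * p) (hH : 0 ≤ H)
    (hb : b * p ≤ (2 - H) * log (n * p)) (hℓ : 1 ≤ ℓ) (hℓb : ℓ ≤ b) :
    ((n - b).descFactorial (b - ℓ) : ℝ) / (n.descFactorial b : ℝ) *
        p ^ (-(ℓ : ℤ)) * (1 - p) ^ ((ℓ : ℤ) - (ℓ.choose 2 : ℤ))
      < 6 ^ ℓ * (n * p) ^ (-H * ℓ / 2 + ℓ / log n) := by
  set C : ℝ := n * p
  set L := log C
  have hp_half : p ≤ 1 / 2 := hpn.le.trans (by gcongr)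
  have hL0 : 0 ≤ L := log_nonneg (by linarith)
  have h4L : 4 * L ≤ C := mul_log_le_self (by norm_num) (by linarith)
  have hbp : b * p ≤ 2 * L := by nlinarith
  have hLlogn : L ≤ log n := log_le_log (by linarith) (by nlinarith)
  have hbn : b < n := by
    have : (b : ℝ) * p < n * p := by linarith
    exact_mod_cast lt_of_mul_lt_mul_right this hp0.le
  set q : ℝ := ((n - b : ℕ) : ℝ) * p with hqdef
  have hq : C / 2 ≤ q := by
    rw [hqdef, Nat.cast_sub hbn.le]
    linarith
  have hlogq : L - log 2 ≤ log q := by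
    have := log_le_log (by positivity) hq
    rwa [log_div (by positivity) two_ne_zero] at this
  have hchoose : (ℓ.choose 2 : ℝ) ≤ ℓ * b / 2 := by
    rw [Nat.cast_choose_two]
    have : (ℓ : ℝ) ≤ b := by exact_mod_cast hℓb
    gcongr
    linarith
  have hlog1p := neg_log_one_sub_le hp_half
  have hq0 : 0 < q := by linarith
  have h1p : 0 < 1 - p := by linarith
  refine (descFactorial_div_mul_zpow_le hbn hℓb hp0 (by linarith)).trans_lt ?_
  rw [← hqdef, ← log_lt_log_iff (by positivity) (by positivity),
    log_mul (by positivity) (by positivity), log_pow, log_pow, log_inv, log_inv,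
    log_mul (x := 6 ^ ℓ) (by positivity) (by positivity), log_pow, log_rpow (by positivity)]
  have hlog1p0 : 0 ≤ -log (1 - p) := by
    rw [neg_nonneg]
    exact log_nonpos h1p.le (by linarith)
  have hfrac : L / log n ≤ 1 := (div_le_one (by linarith)).mpr hLlogn
  calc (ℓ : ℝ) * -log q + (ℓ.choose 2 : ℝ) * -log (1 - p)
      ≤ ℓ * (log 2 - L) + ℓ * b / 2 * (p + 2 * p ^ 2) := by
        gcongr
        linarith
    _ = ℓ * (log 2 - L) + ℓ / 2 * (b * p) + ℓ * (b * p) * p := by ring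
    _ ≤ ℓ * (log 2 - L) + ℓ / 2 * ((2 - H) * L) + ℓ * (2 * L) * (1 / log n) := by
        gcongr
    _ = ℓ * (log 2 + 2 * (L / log n)) + (-H * ℓ / 2) * L := by ring
    _ < ℓ * log 6 + (-H * ℓ / 2 + ℓ / log n) * L := by
        have := log_two_add_one_lt_log_six
        have : ℓ * (log 2 + L / log n) < ℓ * log 6 := by gcongr; linarith
        have : (ℓ : ℝ) / log n * L = ℓ * (L / log n) := by ring
        linarith

theorem statement14 (p : ℕ → ℝ)
    (hp : ∀ᶠ n : ℕ in atTop,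
      (n : ℝ) ^ (-(1 : ℝ)/2) * Real.log n ^ ((10 : ℝ)/9) < p n ∧ p n < 1 / Real.log n)
    (c h : ℕ → ℝ)
    (hc : ∀ n, c n = n * p n)
    (hh : ∀ n, h n = 3 * Real.log (Real.log (c n)) / Real.log (c n))
    (B : ℕ → ℕ)
    (hB : ∀ n, B n = ⌊(2 - h n) * ((n : ℝ) * Real.log (c n)) / c n⌋₊) :
    ∀ᶠ n : ℕ in atTop, ∀ ℓ : ℕ, 1 ≤ ℓ → ℓ ≤ B n →
      ((n - B n).descFactorial (B n - ℓ) : ℝ) / (n.descFactorial (B n) : ℝ) *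
          p n ^ (-(ℓ : ℤ)) * (1 - p n) ^ ((ℓ : ℤ) - (ℓ.choose 2 : ℤ))
        < 6 ^ ℓ * c n ^ (-(h n) * ℓ / 2 + ℓ / Real.log n) := by
  have hlog_atTop : Tendsto (fun n : ℕ => log n) atTop atTop :=
    tendsto_log_atTop.comp tendsto_natCast_atTop_atTop
  filter_upwards [hp, eventually_ge_atTop 4096, hlog_atTop.eventually_ge_atTop 2]
    with n ⟨hp_low, hp_up⟩ hn hlogn ℓ hℓ hℓB
  have hn0 : (0 : ℝ) < n := by positivity
  have hsqrt : n ^ (-(1 : ℝ) / 2) < p n :=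
    lt_of_le_of_lt (le_mul_of_one_le_right (by positivity) (one_le_rpow (by linarith)
      (by norm_num))) hp_low
  have hp0 : 0 < p n := (rpow_pos_of_pos hn0 _).trans hsqrt
  have hC : 64 ≤ c n := by
    rw [hc]
    refine le_trans (le_sqrt_of_sq_le ?_) (sqrt_lt_mul_of_rpow_neg_half_lt hn0 hsqrt).le
    exact_mod_cast (by norm_num : (64 ^ 2 : ℕ) ≤ 4096).trans hn
  have hlogC : 1 ≤ log (c n) :=
    (le_log_iff_exp_le (by linarith)).mpr (by linarith [exp_one_lt_d9])
  have hH : 0 ≤ h n := by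
    rw [hh]
    have := log_nonneg hlogC
    positivity
  have hfloor : (B n : ℝ) ≤ (2 - h n) * (n * log (c n)) / c n := by
    -- `B n ≥ 1` forces the argument of the floor to be at least `1`, hence nonnegative.
    have hBpos : 0 < B n := by omega
    rw [hB] at hBpos ⊢
    exact Nat.floor_le (zero_le_one.trans (Nat.floor_pos.mp hBpos))
  have hBp : B n * p n ≤ (2 - h n) * log (n * p n) :=
    calc B n * p n ≤ (2 - h n) * (n * log (c n)) / c n * p n := by gcongr
      _ = (2 - h n) * log (n * p n) := by rw [hc]; field_simp
  rw [hc] at hC ⊢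
  exact descFactorial_div_mul_zpow_lt hp0 hp_up hlogn hC hH hBp hℓ hℓB
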